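/- arXiv:1604.04714 — 2 statements merged into one kernel-verified Lean document; each statement's English description precedes it below -/
import Mathlib

section
/- Under the hypotheses on the Bloch-decomposition step B_{Δt} (in particular the two orthogonality relations for each φ_j, which hold when the number of bands equals the number of grid points per cell, M = R), the map B_{Δt} conserves the total discrete mass: for every ψ : {0,…,L−1}×{0,…,R−1} → ℂ, writing ψ' = B_{Δt}(ψ), one has ∑_{ℓ=0}^{L−1}∑_{r=0}^{R−1} |ψ'(ℓ,r)|² = ∑_{ℓ=0}^{L−1}∑_{r=0}^{R−1} |ψ(ℓ,r)|². -/
/-!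
`B_{Δt}` is a discrete Fourier transform in the cell index, followed on each quasi-momentum fiber
by the change to band coordinates, unimodular phases and the change back, followed by the inverse
Fourier transform. By the orthogonality relations, each of these linear maps is a multiple of an
isometry for the discrete `ℓ²` mass: the Fourier transform scales the mass by `L` and its inverse by
`1 / L`, the Bloch coefficients scale it by `2π / R` and the synthesis by `R / (2π)`, and the
phases preserve it. The scalings cancel.
-/

open Complex Finset Real

/-- One Bloch-decomposition step `B_{Δt}` of the Bloch decomposition-based
time-splitting scheme, on the fully discrete level: `L` quasi-momentum points
`k_ℓ = -1/2 + ℓ/L`, `R` grid points per cell, discrete Bloch eigenfunctions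
`φ ℓ m r ≈ φ_m(y_r, k_ℓ)` and band energies `E ℓ m ≈ E_m(k_ℓ)`. -/
noncomputable def blochStep (L R : ℕ) (ε Δt : ℝ)
    (φ : Fin L → Fin R → Fin R → ℂ) (E : Fin L → Fin R → ℝ)
    (ψ : Fin L → Fin R → ℂ) : Fin L → Fin R → ℂ :=
  let k : Fin L → ℝ := fun ℓ => -(1/2 : ℝ) + (ℓ : ℝ) / L
  -- step 1.1: ψ̃(ℓ,r) = ∑_j ψ(j,r) exp(−2πi k_ℓ j)
  let ψt : Fin L → Fin R → ℂ := fun ℓ r =>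
    ∑ j : Fin L, ψ j r * Complex.exp (-(2 * π * Complex.I * (k ℓ) * (j : ℝ)))
  -- step 1.2: C(m,ℓ) = (2π/R) ∑_r ψ̃(ℓ,r) conj(φ_ℓ(m,r))
  let C : Fin R → Fin L → ℂ := fun m ℓ =>
    (2 * (π : ℂ) / R) * ∑ r : Fin R, ψt ℓ r * (starRingEnd ℂ) (φ ℓ m r)
  -- step 1.3: C'(m,ℓ) = C(m,ℓ) exp(−i E_ℓ(m) Δt / ε)
  let C' : Fin R → Fin L → ℂ := fun m ℓ =>
    C m ℓ * Complex.exp (-(Complex.I * (E ℓ m) * Δt / ε))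
  -- step 1.4: ψ̃'(ℓ,r) = ∑_m C'(m,ℓ) φ_ℓ(m,r)
  let ψt' : Fin L → Fin R → ℂ := fun ℓ r => ∑ m : Fin R, C' m ℓ * φ ℓ m r
  -- step 1.5: ψ'(ℓ,r) = (1/L) ∑_j ψ̃'(j,r) exp(2πi k_j ℓ)
  fun ℓ r =>
    (1 / (L : ℂ)) * ∑ j : Fin L, ψt' j r * Complex.exp (2 * π * Complex.I * (k j) * (ℓ : ℝ))

theorem sum_norm_sq_sum_mul_eq_of_orthogonal {ι κ : Type*} [Fintype ι] [Fintype κ]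
    [DecidableEq κ] (K : ι → κ → ℂ) (c : ℝ)
    (hK : ∀ a b, ∑ i, K i a * starRingEnd ℂ (K i b) = if a = b then (c : ℂ) else 0)
    (v : κ → ℂ) :
    ∑ i, ‖∑ a, v a * K i a‖ ^ 2 = c * ∑ a, ‖v a‖ ^ 2 := by
  apply Complex.ofReal_injective
  push_cast
  simp_rw [← Complex.mul_conj', map_sum, sum_mul_sum, map_mul]
  calc ∑ i, ∑ a, ∑ b, v a * K i a * (starRingEnd ℂ (v b) * starRingEnd ℂ (K i b))
      = ∑ a, ∑ b, v a * starRingEnd ℂ (v b) * ∑ i, K i a * starRingEnd ℂ (K i b) := by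
        simp_rw [mul_sum]
        rw [sum_comm]
        refine sum_congr rfl fun a _ => ?_
        rw [sum_comm]
        refine sum_congr rfl fun b _ => sum_congr rfl fun i _ => by ring
    _ = c * ∑ a, v a * starRingEnd ℂ (v a) := by
        simp_rw [hK, mul_ite, mul_zero, sum_ite_eq, mem_univ, if_true, mul_sum]
        exact sum_congr rfl fun a _ => by ring

theorem IsPrimitiveRoot.sum_range_pow_zpow {K : Type*} [Field K] {ζ : K} {L : ℕ}
    (hζ : IsPrimitiveRoot ζ L) {d : ℤ} (hd : |d| < L) :
    ∑ ℓ ∈ range L, (ζ ^ d) ^ ℓ = if d = 0 then (L : K) else 0 := by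
  split_ifs with h
  · simp [h]
  · have hne : ζ ^ d ≠ 1 := fun h1 =>
      h (Int.eq_zero_of_abs_lt_dvd ((hζ.zpow_eq_one_iff_dvd d).1 h1) hd)
    rw [geom_sum_eq hne, ← zpow_natCast, ← zpow_mul, mul_comm, zpow_mul, zpow_natCast,
      hζ.pow_eq_one, one_zpow, sub_self, zero_div]

theorem sum_exp_two_pi_I_mul_sub {L : ℕ} (c : ℝ) (a b : Fin L) :
    ∑ ℓ : Fin L, exp (2 * π * I * ((c : ℂ) + (ℓ : ℂ) / L) * ((a : ℂ) - b)) =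
      if a = b then (L : ℂ) else 0 := by
  have hL : L ≠ 0 := Fin.pos a |>.ne'
  set ζ := exp (2 * π * I / L)
  have hterm : ∀ ℓ : Fin L, exp (2 * π * I * ((c : ℂ) + (ℓ : ℂ) / L) * ((a : ℂ) - b)) =
      exp (2 * π * I * c * ((a : ℂ) - b)) * (ζ ^ ((a : ℤ) - b)) ^ (ℓ : ℕ) := by
    intro ℓ
    rw [← exp_int_mul, ← Complex.exp_nat_mul, ← Complex.exp_add]
    push_cast
    ring_nf
  have hd : |(a : ℤ) - b| < L := abs_sub_lt_iff.2 ⟨by omega, by omega⟩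
  rw [sum_congr rfl fun ℓ _ => hterm ℓ, ← mul_sum,
    Fin.sum_univ_eq_sum_range (fun ℓ => (ζ ^ ((a : ℤ) - b)) ^ ℓ),
    (Complex.isPrimitiveRoot_exp L hL).sum_range_pow_zpow hd]
  simp only [sub_eq_zero, Int.natCast_inj, Fin.val_inj]
  split_ifs with h
  · simp [h]
  · rw [mul_zero]

theorem norm_exp_neg_I_mul_div (E Δt ε : ℝ) : ‖exp (-(I * E * Δt / ε))‖ = 1 := by
  rw [← Complex.norm_exp_ofReal_mul_I (-(E * Δt / ε))]
  push_cast
  ring_nf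

noncomputable def quasiMomentum (L : ℕ) (ℓ : Fin L) : ℝ := -(1 / 2 : ℝ) + (ℓ : ℝ) / L

noncomputable def momentumTransform {ι : Type*} (L : ℕ) (ψ : Fin L → ι → ℂ) (ℓ : Fin L)
    (r : ι) : ℂ :=
  ∑ j : Fin L, ψ j r * exp (-(2 * π * I * quasiMomentum L ℓ * (j : ℝ)))

noncomputable def inverseMomentumTransform {ι : Type*} (L : ℕ) (ψ : Fin L → ι → ℂ)
    (ℓ : Fin L) (r : ι) : ℂ :=
  (1 / (L : ℂ)) * ∑ j : Fin L, ψ j r * exp (2 * π * I * quasiMomentum L j * (ℓ : ℝ))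

noncomputable def blochCoefficient {R : ℕ} (φ : Fin R → Fin R → ℂ) (f : Fin R → ℂ)
    (m : Fin R) : ℂ :=
  (2 * (π : ℂ) / R) * ∑ s : Fin R, f s * starRingEnd ℂ (φ m s)

noncomputable def blochSynthesis {R : ℕ} (φ : Fin R → Fin R → ℂ) (c : Fin R → ℂ)
    (r : Fin R) : ℂ :=
  ∑ m : Fin R, c m * φ m r

noncomputable def bandPropagate {R : ℕ} (ε Δt : ℝ) (φ : Fin R → Fin R → ℂ) (E : Fin R → ℝ)
    (f : Fin R → ℂ) : Fin R → ℂ :=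
  blochSynthesis φ fun m => blochCoefficient φ f m * exp (-(I * E m * Δt / ε))

theorem blochStep_eq (L R : ℕ) (ε Δt : ℝ) (φ : Fin L → Fin R → Fin R → ℂ)
    (E : Fin L → Fin R → ℝ) (ψ : Fin L → Fin R → ℂ) :
    blochStep L R ε Δt φ E ψ = inverseMomentumTransform L
      (fun ℓ => bandPropagate ε Δt (φ ℓ) (E ℓ) (momentumTransform L ψ ℓ)) :=
  rfl

theorem sum_norm_sq_momentumTransform {ι : Type*} [Fintype ι] (L : ℕ) (ψ : Fin L → ι → ℂ) :
    ∑ ℓ, ∑ r, ‖momentumTransform L ψ ℓ r‖ ^ 2 = L * ∑ ℓ, ∑ r, ‖ψ ℓ r‖ ^ 2 := by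
  have hK : ∀ a b : Fin L, ∑ ℓ : Fin L, exp (-(2 * π * I * quasiMomentum L ℓ * (a : ℝ))) *
      starRingEnd ℂ (exp (-(2 * π * I * quasiMomentum L ℓ * (b : ℝ)))) =
        if a = b then ((L : ℝ) : ℂ) else 0 := by
    intro a b
    simp_rw [← Complex.exp_conj, ← Complex.exp_add, ofReal_natCast, eq_comm (a := a)]
    rw [← sum_exp_two_pi_I_mul_sub (-(1 / 2)) b a]
    refine sum_congr rfl fun ℓ _ => congrArg cexp ?_
    simp only [quasiMomentum, map_neg, map_mul, conj_I, conj_ofReal, map_ofNat]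
    push_cast [map_natCast]
    ring
  rw [sum_comm, sum_comm (f := fun ℓ r => ‖ψ ℓ r‖ ^ 2), mul_sum]
  exact sum_congr rfl fun r _ => sum_norm_sq_sum_mul_eq_of_orthogonal _ _ hK (ψ · r)

theorem sum_norm_sq_inverseMomentumTransform {ι : Type*} [Fintype ι] (L : ℕ)
    (ψ : Fin L → ι → ℂ) :
    ∑ ℓ, ∑ r, ‖inverseMomentumTransform L ψ ℓ r‖ ^ 2 = (L : ℝ)⁻¹ * ∑ ℓ, ∑ r, ‖ψ ℓ r‖ ^ 2 := by
  have hK : ∀ a b : Fin L, ∑ ℓ : Fin L, exp (2 * π * I * quasiMomentum L a * (ℓ : ℝ)) *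
      starRingEnd ℂ (exp (2 * π * I * quasiMomentum L b * (ℓ : ℝ))) =
        if a = b then ((L : ℝ) : ℂ) else 0 := by
    intro a b
    simp_rw [← Complex.exp_conj, ← Complex.exp_add, ofReal_natCast]
    rw [← sum_exp_two_pi_I_mul_sub 0 a b]
    refine sum_congr rfl fun ℓ _ => congrArg cexp ?_
    simp only [quasiMomentum, map_mul, conj_I, conj_ofReal, map_ofNat]
    push_cast [map_natCast]
    ring
  have hscale : ((L : ℝ)⁻¹) ^ 2 * L = (L : ℝ)⁻¹ := by
    rcases eq_or_ne (L : ℝ) 0 with h | h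
    · simp [h]
    · field_simp
  simp only [inverseMomentumTransform, norm_mul, mul_pow, one_div, norm_inv, Complex.norm_natCast]
  rw [sum_comm, sum_comm (f := fun ℓ r => ‖ψ ℓ r‖ ^ 2), mul_sum]
  refine sum_congr rfl fun r _ => ?_
  rw [← mul_sum, sum_norm_sq_sum_mul_eq_of_orthogonal _ _ hK (ψ · r), ← mul_assoc, hscale]

section BlochBasis

variable {R : ℕ} {φ : Fin R → Fin R → ℂ}

theorem sum_norm_sq_blochSynthesis
    (horth : ∀ m n, ∑ r, φ m r * starRingEnd ℂ (φ n r) = if m = n then (R : ℂ) / (2 * π) else 0)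
    (c : Fin R → ℂ) :
    ∑ r, ‖blochSynthesis φ c r‖ ^ 2 = R / (2 * π) * ∑ m, ‖c m‖ ^ 2 :=
  sum_norm_sq_sum_mul_eq_of_orthogonal (fun r m => φ m r) _ (by push_cast; exact horth) c

theorem sum_norm_sq_blochCoefficient
    (hcompl : ∀ r s, ∑ m, φ m r * starRingEnd ℂ (φ m s) = if r = s then (R : ℂ) / (2 * π) else 0)
    (f : Fin R → ℂ) :
    ∑ m, ‖blochCoefficient φ f m‖ ^ 2 = 2 * π / R * ∑ r, ‖f r‖ ^ 2 := by
  have hK : ∀ r s, ∑ m, starRingEnd ℂ (φ m r) * starRingEnd ℂ (starRingEnd ℂ (φ m s)) =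
      if r = s then (((R : ℝ) / (2 * π) : ℝ) : ℂ) else 0 := by
    intro r s
    simp_rw [← map_mul, ← map_sum, hcompl]
    split_ifs <;> simp [map_ofNat]
  have hnorm : ‖2 * (π : ℂ) / R‖ = 2 * π / R := by simp [abs_of_pos pi_pos]
  have hscale : (2 * π / R) ^ 2 * (R / (2 * π)) = 2 * π / R := by
    rcases eq_or_ne (R : ℝ) 0 with h | h
    · simp [h]
    · field_simp
  simp only [blochCoefficient, norm_mul, mul_pow]
  rw [← mul_sum, sum_norm_sq_sum_mul_eq_of_orthogonal _ _ hK f, ← mul_assoc, hnorm, hscale]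

theorem sum_norm_sq_bandPropagate (hR : R ≠ 0) (ε Δt : ℝ) (E : Fin R → ℝ)
    (horth : ∀ m n, ∑ r, φ m r * starRingEnd ℂ (φ n r) = if m = n then (R : ℂ) / (2 * π) else 0)
    (hcompl : ∀ r s, ∑ m, φ m r * starRingEnd ℂ (φ m s) = if r = s then (R : ℂ) / (2 * π) else 0)
    (f : Fin R → ℂ) :
    ∑ r, ‖bandPropagate ε Δt φ E f r‖ ^ 2 = ∑ r, ‖f r‖ ^ 2 := by
  have hR' : (R : ℝ) ≠ 0 := Nat.cast_ne_zero.2 hR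
  simp only [bandPropagate, sum_norm_sq_blochSynthesis horth, norm_mul, norm_exp_neg_I_mul_div,
    mul_one, sum_norm_sq_blochCoefficient hcompl]
  field_simp

end BlochBasis

theorem blochStep_conserves_mass_general
    (L R : ℕ) (hL : 1 ≤ L) (hR : 1 ≤ R) (ε Δt : ℝ)
    (φ : Fin L → Fin R → Fin R → ℂ) (E : Fin L → Fin R → ℝ)
    (horth₁ : ∀ j : Fin L, ∀ m n : Fin R,
      ∑ r : Fin R, φ j m r * (starRingEnd ℂ) (φ j n r) =
        if m = n then ((R : ℂ) / (2 * π)) else 0)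
    (horth₂ : ∀ j : Fin L, ∀ r s : Fin R,
      ∑ m : Fin R, φ j m r * (starRingEnd ℂ) (φ j m s) =
        if r = s then ((R : ℂ) / (2 * π)) else 0)
    (ψ : Fin L → Fin R → ℂ) :
    ∑ ℓ : Fin L, ∑ r : Fin R, ‖blochStep L R ε Δt φ E ψ ℓ r‖ ^ 2 =
      ∑ ℓ : Fin L, ∑ r : Fin R, ‖ψ ℓ r‖ ^ 2 := by
  have hL' : (L : ℝ) ≠ 0 := by positivity
  have hfiber (ℓ : Fin L) (f : Fin R → ℂ) :
      ∑ r, ‖bandPropagate ε Δt (φ ℓ) (E ℓ) f r‖ ^ 2 = ∑ r, ‖f r‖ ^ 2 :=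
    sum_norm_sq_bandPropagate (by omega) ε Δt (E ℓ) (horth₁ ℓ) (horth₂ ℓ) f
  rw [blochStep_eq, sum_norm_sq_inverseMomentumTransform, sum_congr rfl fun ℓ _ => hfiber ℓ _,
    sum_norm_sq_momentumTransform, inv_mul_cancel_left₀ hL']

theorem blochStep_conserves_mass
    (L R : ℕ) (hL : 1 ≤ L) (hR : 1 ≤ R) (ε Δt : ℝ) (hε : 0 < ε)
    (φ : Fin L → Fin R → Fin R → ℂ) (E : Fin L → Fin R → ℝ)
    (horth₁ : ∀ j : Fin L, ∀ m n : Fin R,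
      ∑ r : Fin R, φ j m r * (starRingEnd ℂ) (φ j n r) =
        if m = n then ((R : ℂ) / (2 * π)) else 0)
    (horth₂ : ∀ j : Fin L, ∀ r s : Fin R,
      ∑ m : Fin R, φ j m r * (starRingEnd ℂ) (φ j m s) =
        if r = s then ((R : ℂ) / (2 * π)) else 0)
    (ψ : Fin L → Fin R → ℂ) :
    ∑ ℓ : Fin L, ∑ r : Fin R, ‖blochStep L R ε Δt φ E ψ ℓ r‖ ^ 2 =
      ∑ ℓ : Fin L, ∑ r : Fin R, ‖ψ ℓ r‖ ^ 2 :=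
  blochStep_conserves_mass_general L R hL hR ε Δt φ E horth₁ horth₂ ψ
end

section
/- Under the hypotheses on the Bloch-decomposition step B_{Δt}, let P ≥ 1, for each grid point (ℓ,r) let A_{ℓ,r} be a symmetric real P×P matrix, and consider the one-step Bloch decomposition-based stochastic Galerkin map: given ψ : {0,…,P−1}×{0,…,L−1}×{0,…,R−1} → ℂ, first apply B_{Δt} to ψ_p := ψ(p,·,·) for each gPC index p, obtaining ψ', and then for each (ℓ,r) replace the vector (ψ'(p,ℓ,r))_{p=0}^{P−1} ∈ ℂ^P by exp(−i·(Δt/ε)·A_{ℓ,r}) applied to it, where exp is the matrix exponential of the complexification of A_{ℓ,r}, obtaining ψ''. Then ∑_{p=0}^{P−1}∑_{ℓ=0}^{L−1}∑_{r=0}^{R−1} |ψ''(p,ℓ,r)|² = ∑_{p=0}^{P−1}∑_{ℓ=0}^{L−1}∑_{r=0}^{R−1} |ψ(p,ℓ,r)|². In particular the Bloch decomposition-based stochastic Galerkin scheme has the property of weak conservation of mass and is unconditionally stable. -/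
/-!
Every stage of the scheme is, along one index and with the other indices fixed, multiplication by
a matrix whose rows are orthogonal with a common squared length `c`, and such a map scales the
mass `∑ ‖·‖²` by exactly `c`. For the Bloch step the factors are `L` (the discrete Fourier
transform in `ℓ`), `2π/R` (projection onto the discrete Bloch eigenfunctions), `1` (the band
phases), `R/(2π)` (reconstruction from the eigenfunctions) and `1/L` (the inverse transform), whose
product is `1`. The coupling step multiplies each gPC vector by the exponential of a skew-Hermitian
matrix, which is unitary.
-/

open Complex Finset Real

open scoped Matrix

section Gram

variable {𝕜 ι κ : Type*} [RCLike 𝕜] [Fintype ι] [Fintype κ]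

theorem Matrix.dotProduct_star_eq_sum_norm_sq (v : ι → 𝕜) :
    v ⬝ᵥ star v = ((∑ i, ‖v i‖ ^ 2 : ℝ) : 𝕜) := by
  simp [dotProduct, RCLike.mul_conj]

theorem Matrix.sum_norm_sq_vecMul [DecidableEq ι] {M : Matrix ι κ 𝕜} {c : ℝ}
    (hM : M * Mᴴ = (c : 𝕜) • 1) (v : ι → 𝕜) :
    ∑ j, ‖(v ᵥ* M) j‖ ^ 2 = c * ∑ i, ‖v i‖ ^ 2 := by
  apply RCLike.ofReal_injective (K := 𝕜)
  rw [← dotProduct_star_eq_sum_norm_sq, RCLike.ofReal_mul, ← dotProduct_star_eq_sum_norm_sq,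
    star_vecMul, dotProduct_mulVec, vecMul_vecMul, hM, vecMul_smul, vecMul_one, smul_dotProduct,
    smul_eq_mul]

theorem Matrix.sum_norm_sq_mulVec [DecidableEq κ] {M : Matrix ι κ 𝕜} {c : ℝ}
    (hM : Mᴴ * M = (c : 𝕜) • 1) (v : κ → 𝕜) :
    ∑ i, ‖(M *ᵥ v) i‖ ^ 2 = c * ∑ j, ‖v j‖ ^ 2 := by
  rw [← vecMul_transpose]
  refine sum_norm_sq_vecMul ?_ v
  rw [conjTranspose_transpose_eq_transpose_conjTranspose, ← transpose_mul, hM, transpose_smul,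
    transpose_one]

theorem Matrix.sum_norm_sq_mulVec_of_mem_unitaryGroup [DecidableEq ι] {U : Matrix ι ι 𝕜}
    (hU : U ∈ unitaryGroup ι 𝕜) (v : ι → 𝕜) :
    ∑ i, ‖(U *ᵥ v) i‖ ^ 2 = ∑ i, ‖v i‖ ^ 2 := by
  simpa using sum_norm_sq_mulVec (c := 1)
    (by simpa [star_eq_conjTranspose] using mem_unitaryGroup_iff'.1 hU) v

theorem Matrix.mul_conjTranspose_eq_smul_one [DecidableEq ι] {M : Matrix ι ι 𝕜} {c : 𝕜}
    (hc : c ≠ 0) (hM : Mᴴ * M = c • 1) : M * Mᴴ = c • 1 := by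
  have h : (c⁻¹ • Mᴴ) * M = 1 := by
    rw [smul_mul_assoc, hM, smul_smul, inv_mul_cancel₀ hc, one_smul]
  rw [mul_eq_one_comm, mul_smul_comm] at h
  rw [← smul_right_inj (inv_ne_zero hc), h, smul_smul, inv_mul_cancel₀ hc, one_smul]

end Gram

section Arrays

variable {𝕜 ι ι' κ κ' : Type*} [RCLike 𝕜] [Fintype ι] [Fintype ι'] [Fintype κ] [Fintype κ']

def vecMulFst (M : Matrix ι ι' 𝕜) (ψ : ι → κ → 𝕜) : ι' → κ → 𝕜 :=
  fun i' k => ((fun i => ψ i k) ᵥ* M) i'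

def vecMulSnd (M : ι → Matrix κ κ' 𝕜) (ψ : ι → κ → 𝕜) : ι → κ' → 𝕜 :=
  fun i => ψ i ᵥ* M i

theorem sum_sum_norm_sq_vecMulFst [DecidableEq ι] {M : Matrix ι ι' 𝕜} {c : ℝ}
    (hM : M * Mᴴ = (c : 𝕜) • 1) (ψ : ι → κ → 𝕜) :
    ∑ i', ∑ k, ‖vecMulFst M ψ i' k‖ ^ 2 = c * ∑ i, ∑ k, ‖ψ i k‖ ^ 2 := by
  rw [sum_comm, sum_comm (γ := ι), mul_sum]
  exact sum_congr rfl fun k _ => Matrix.sum_norm_sq_vecMul hM _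

theorem sum_sum_norm_sq_vecMulSnd [DecidableEq κ] {M : ι → Matrix κ κ' 𝕜} {c : ℝ}
    (hM : ∀ i, M i * (M i)ᴴ = (c : 𝕜) • 1) (ψ : ι → κ → 𝕜) :
    ∑ i, ∑ k', ‖vecMulSnd M ψ i k'‖ ^ 2 = c * ∑ i, ∑ k, ‖ψ i k‖ ^ 2 := by
  rw [mul_sum]
  exact sum_congr rfl fun i _ => Matrix.sum_norm_sq_vecMul (hM i) _

theorem sum_sum_norm_sq_smul (c : 𝕜) (ψ : ι → κ → 𝕜) :
    ∑ i, ∑ k, ‖(c • ψ) i k‖ ^ 2 = ‖c‖ ^ 2 * ∑ i, ∑ k, ‖ψ i k‖ ^ 2 := by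
  simp only [Pi.smul_apply, norm_smul, mul_pow, mul_sum]

end Arrays

theorem sum_sum_norm_sq_mul_exp_of_re_eq_zero {ι κ : Type*} [Fintype ι] [Fintype κ]
    (ψ θ : ι → κ → ℂ) (hθ : ∀ i k, (θ i k).re = 0) :
    ∑ i, ∑ k, ‖ψ i k * exp (θ i k)‖ ^ 2 = ∑ i, ∑ k, ‖ψ i k‖ ^ 2 := by
  simp [norm_exp, hθ]

theorem Fin.intCast_dvd_sub_iff {L : ℕ} (j j' : Fin L) : (L : ℤ) ∣ (j : ℤ) - j' ↔ j = j' := by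
  refine ⟨fun h => Fin.ext ?_, fun h => by simp [h]⟩
  have := Int.eq_zero_of_abs_lt_dvd h (by rw [abs_sub_lt_iff]; omega)
  omega

theorem sum_exp_two_pi_mul_I_mul_div_eq_ite {L : ℕ} (hL : L ≠ 0) (d : ℤ) :
    ∑ ℓ : Fin L, exp (2 * π * I * d * ℓ / L) = if (L : ℤ) ∣ d then (L : ℂ) else 0 := by
  have hζ : IsPrimitiveRoot (exp (2 * π * I / L)) L := isPrimitiveRoot_exp L hL
  set ζ := exp (2 * π * I / L)
  set z := ζ ^ d
  have hterm : ∀ ℓ : Fin L, exp (2 * π * I * d * ℓ / L) = z ^ (ℓ : ℕ) := fun ℓ => by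
    simp only [z, ζ, ← exp_int_mul, ← Complex.exp_nat_mul]
    ring_nf
  simp_rw [hterm, Fin.sum_univ_eq_sum_range (z ^ ·)]
  split_ifs with h
  · simp [z, (hζ.zpow_eq_one_iff_dvd d).2 h]
  · have hz : z ^ L = 1 := by
      rw [← zpow_natCast, ← zpow_mul, mul_comm d, zpow_mul, zpow_natCast, hζ.pow_eq_one, one_zpow]
    rw [geom_sum_eq (mt (hζ.zpow_eq_one_iff_dvd d).1 h), hz, sub_self, zero_div]

noncomputable def blochMomentum (L : ℕ) (ℓ : Fin L) : ℝ := -(1/2 : ℝ) + (ℓ : ℝ) / L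

noncomputable def blochFourier (L : ℕ) : Matrix (Fin L) (Fin L) ℂ :=
  Matrix.of fun j ℓ => exp (-(2 * π * I * blochMomentum L ℓ * (j : ℝ)))

theorem blochFourier_conjTranspose_apply (L : ℕ) (j ℓ : Fin L) :
    (blochFourier L)ᴴ j ℓ = exp (2 * π * I * blochMomentum L j * (ℓ : ℝ)) := by
  simp [blochFourier, ← exp_conj, map_ofNat]

-- The shift `-1/2` of the momenta cancels in `k_ℓ - k_ℓ' = (ℓ - ℓ') / L`.
theorem conjTranspose_blochFourier_mul {L : ℕ} (hL : L ≠ 0) :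
    (blochFourier L)ᴴ * blochFourier L = (L : ℂ) • 1 := by
  ext ℓ ℓ'
  have hterm : ∀ j : Fin L, (blochFourier L)ᴴ ℓ j * blochFourier L j ℓ' =
      exp (2 * π * I * ((ℓ : ℤ) - ℓ' : ℤ) * j / L) := fun j => by
    rw [blochFourier_conjTranspose_apply, blochFourier, Matrix.of_apply, ← Complex.exp_add]
    simp only [blochMomentum]
    push_cast
    field_simp
    ring_nf
  simp only [Matrix.mul_apply, hterm, sum_exp_two_pi_mul_I_mul_div_eq_ite hL,
    Fin.intCast_dvd_sub_iff, Matrix.smul_apply, Matrix.one_apply, smul_eq_mul, mul_ite, mul_one,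
    mul_zero]

theorem blochStep_eq_s7 (L R : ℕ) (ε Δt : ℝ) (φ : Fin L → Fin R → Fin R → ℂ)
    (E : Fin L → Fin R → ℝ) (ψ : Fin L → Fin R → ℂ) :
    blochStep L R ε Δt φ E ψ = (1 / (L : ℂ)) • vecMulFst (blochFourier L)ᴴ
      (vecMulSnd (fun ℓ => Matrix.of (φ ℓ)) fun ℓ m =>
        ((2 * π / R : ℂ) • vecMulSnd (fun ℓ => (Matrix.of (φ ℓ))ᴴ)
          (vecMulFst (blochFourier L) ψ)) ℓ m * exp (-(I * E ℓ m * Δt / ε))) := by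
  ext ℓ r
  simp only [Pi.smul_apply, smul_eq_mul, vecMulFst, vecMulSnd, Matrix.vecMul, dotProduct,
    blochFourier_conjTranspose_apply]
  rfl

theorem sum_sum_norm_sq_blochStep {L R : ℕ} (hL : L ≠ 0) (hR : R ≠ 0) (ε Δt : ℝ)
    {φ : Fin L → Fin R → Fin R → ℂ} (E : Fin L → Fin R → ℝ)
    (horth : ∀ j : Fin L, ∀ m n : Fin R,
      ∑ r : Fin R, φ j m r * (starRingEnd ℂ) (φ j n r) = if m = n then ((R : ℂ) / (2 * π)) else 0)
    (ψ : Fin L → Fin R → ℂ) :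
    ∑ ℓ, ∑ r, ‖blochStep L R ε Δt φ E ψ ℓ r‖ ^ 2 = ∑ ℓ, ∑ r, ‖ψ ℓ r‖ ^ 2 := by
  have hF : blochFourier L * (blochFourier L)ᴴ = ((L : ℝ) : ℂ) • 1 := by
    rw [ofReal_natCast]
    exact Matrix.mul_conjTranspose_eq_smul_one (Nat.cast_ne_zero.2 hL)
      (conjTranspose_blochFourier_mul hL)
  have hFH : (blochFourier L)ᴴ * (blochFourier L)ᴴᴴ = ((L : ℝ) : ℂ) • 1 := by
    rw [Matrix.conjTranspose_conjTranspose, ofReal_natCast, conjTranspose_blochFourier_mul hL]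
  have hΦ : ∀ ℓ, Matrix.of (φ ℓ) * (Matrix.of (φ ℓ))ᴴ = ((R / (2 * π) : ℝ) : ℂ) • 1 :=
    fun ℓ => by
      ext m n
      simp [Matrix.mul_apply, horth, Matrix.one_apply]
  have hΦH : ∀ ℓ, (Matrix.of (φ ℓ))ᴴ * (Matrix.of (φ ℓ))ᴴᴴ = ((R / (2 * π) : ℝ) : ℂ) • 1 :=
    fun ℓ => Matrix.mul_conjTranspose_eq_smul_one
      (ofReal_ne_zero.2 (div_ne_zero (Nat.cast_ne_zero.2 hR) (by positivity)))
      (by rw [Matrix.conjTranspose_conjTranspose]; exact hΦ ℓ)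
  rw [blochStep_eq_s7, sum_sum_norm_sq_smul, sum_sum_norm_sq_vecMulFst (c := L) hFH,
    sum_sum_norm_sq_vecMulSnd (c := R / (2 * π)) hΦ,
    sum_sum_norm_sq_mul_exp_of_re_eq_zero _ _ (by simp), sum_sum_norm_sq_smul,
    sum_sum_norm_sq_vecMulSnd (c := R / (2 * π)) hΦH, sum_sum_norm_sq_vecMulFst (c := L) hF]
  have hπ : 0 < π := pi_pos
  rw [norm_div, norm_div, norm_one, Complex.norm_natCast, Complex.norm_natCast, norm_mul,
    Complex.norm_ofNat, norm_real, Real.norm_of_nonneg hπ.le]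
  field_simp

theorem Matrix.IsSymm.isHermitian_map_ofReal {n : Type*} {A : Matrix n n ℝ} (hA : A.IsSymm) :
    (A.map ofReal).IsHermitian := by
  ext i j
  simp [hA.apply]

theorem Matrix.IsHermitian.exp_smul_mem_unitaryGroup {n : Type*} [Fintype n] [DecidableEq n]
    {B : Matrix n n ℂ} (hB : B.IsHermitian) {z : ℂ} (hz : z ∈ skewAdjoint ℂ) :
    NormedSpace.exp (z • B) ∈ Matrix.unitaryGroup n ℂ := by
  have hstar : star (z • B) = -(z • B) := by
    rw [star_smul, skewAdjoint.mem_iff.1 hz, Matrix.star_eq_conjTranspose, hB.eq, neg_smul]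
  rw [Matrix.mem_unitaryGroup_iff', Matrix.star_eq_conjTranspose, ← Matrix.exp_conjTranspose,
    ← Matrix.star_eq_conjTranspose, hstar,
    ← Matrix.exp_add_of_commute _ _ (Commute.refl (z • B)).neg_left, neg_add_cancel,
    NormedSpace.exp_zero]

theorem BDSG_conserves_mass_general
    (L R P : ℕ) (hL : 1 ≤ L) (hR : 1 ≤ R) (ε Δt : ℝ)
    (φ : Fin L → Fin R → Fin R → ℂ) (E : Fin L → Fin R → ℝ)
    (horth₁ : ∀ j : Fin L, ∀ m n : Fin R,
      ∑ r : Fin R, φ j m r * (starRingEnd ℂ) (φ j n r) =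
        if m = n then ((R : ℂ) / (2 * π)) else 0)
    -- the Galerkin coupling matrices `A_U(x_{ℓ,r})`, real symmetric
    (A : Fin L → Fin R → Matrix (Fin P) (Fin P) ℝ)
    (hA : ∀ ℓ : Fin L, ∀ r : Fin R, (A ℓ r).IsSymm)
    (ψ : Fin P → Fin L → Fin R → ℂ)
    -- step 1: apply the Bloch-decomposition step to each gPC component
    (ψ' : Fin P → Fin L → Fin R → ℂ)
    (hψ' : ∀ p : Fin P, ψ' p = blochStep L R ε Δt φ E (ψ p))
    -- step 2: at each grid point, apply exp(−i(Δt/ε)A_{ℓ,r}) to the gPC vector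
    (ψ'' : Fin P → Fin L → Fin R → ℂ)
    (hψ'' : ∀ p : Fin P, ∀ ℓ : Fin L, ∀ r : Fin R,
      ψ'' p ℓ r =
        (NormedSpace.exp
            ((-(Complex.I * (Δt / ε))) • (A ℓ r).map (Complex.ofReal))).mulVec
          (fun q => ψ' q ℓ r) p) :
    ∑ p : Fin P, ∑ ℓ : Fin L, ∑ r : Fin R, ‖ψ'' p ℓ r‖ ^ 2 =
      ∑ p : Fin P, ∑ ℓ : Fin L, ∑ r : Fin R, ‖ψ p ℓ r‖ ^ 2 := by
  have hskew : -(I * (Δt / ε)) ∈ skewAdjoint ℂ := by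
    simp [skewAdjoint.mem_iff]
  have hcoupling : ∀ ℓ r, ∑ p, ‖ψ'' p ℓ r‖ ^ 2 = ∑ p, ‖ψ' p ℓ r‖ ^ 2 := fun ℓ r => by
    simp_rw [hψ'']
    exact Matrix.sum_norm_sq_mulVec_of_mem_unitaryGroup
      ((hA ℓ r).isHermitian_map_ofReal.exp_smul_mem_unitaryGroup hskew) _
  calc ∑ p, ∑ ℓ, ∑ r, ‖ψ'' p ℓ r‖ ^ 2
      = ∑ ℓ, ∑ r, ∑ p, ‖ψ'' p ℓ r‖ ^ 2 := by simp_rw [sum_comm (γ := Fin P)]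
    _ = ∑ ℓ, ∑ r, ∑ p, ‖ψ' p ℓ r‖ ^ 2 := by simp_rw [hcoupling]
    _ = ∑ p, ∑ ℓ, ∑ r, ‖ψ' p ℓ r‖ ^ 2 := by simp_rw [sum_comm (γ := Fin P)]
    _ = ∑ p, ∑ ℓ, ∑ r, ‖ψ p ℓ r‖ ^ 2 := by
      simp_rw [hψ', sum_sum_norm_sq_blochStep (by omega) (by omega) ε Δt E horth₁]

theorem BDSG_conserves_mass
    (L R P : ℕ) (hL : 1 ≤ L) (hR : 1 ≤ R) (hP : 1 ≤ P) (ε Δt : ℝ) (hε : 0 < ε)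
    (φ : Fin L → Fin R → Fin R → ℂ) (E : Fin L → Fin R → ℝ)
    (horth₁ : ∀ j : Fin L, ∀ m n : Fin R,
      ∑ r : Fin R, φ j m r * (starRingEnd ℂ) (φ j n r) =
        if m = n then ((R : ℂ) / (2 * π)) else 0)
    (horth₂ : ∀ j : Fin L, ∀ r s : Fin R,
      ∑ m : Fin R, φ j m r * (starRingEnd ℂ) (φ j m s) =
        if r = s then ((R : ℂ) / (2 * π)) else 0)
    -- the Galerkin coupling matrices `A_U(x_{ℓ,r})`, real symmetric
    (A : Fin L → Fin R → Matrix (Fin P) (Fin P) ℝ)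
    (hA : ∀ ℓ : Fin L, ∀ r : Fin R, (A ℓ r).IsSymm)
    (ψ : Fin P → Fin L → Fin R → ℂ)
    -- step 1: apply the Bloch-decomposition step to each gPC component
    (ψ' : Fin P → Fin L → Fin R → ℂ)
    (hψ' : ∀ p : Fin P, ψ' p = blochStep L R ε Δt φ E (ψ p))
    -- step 2: at each grid point, apply exp(−i(Δt/ε)A_{ℓ,r}) to the gPC vector
    (ψ'' : Fin P → Fin L → Fin R → ℂ)
    (hψ'' : ∀ p : Fin P, ∀ ℓ : Fin L, ∀ r : Fin R,
      ψ'' p ℓ r =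
        (NormedSpace.exp
            ((-(Complex.I * (Δt / ε))) • (A ℓ r).map (Complex.ofReal))).mulVec
          (fun q => ψ' q ℓ r) p) :
    ∑ p : Fin P, ∑ ℓ : Fin L, ∑ r : Fin R, ‖ψ'' p ℓ r‖ ^ 2 =
      ∑ p : Fin P, ∑ ℓ : Fin L, ∑ r : Fin R, ‖ψ p ℓ r‖ ^ 2 :=
  BDSG_conserves_mass_general L R P hL hR ε Δt φ E horth₁ A hA ψ ψ' hψ' ψ'' hψ''
end
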